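/- arXiv:2408.12869 — 2 statements merged into one kernel-verified Lean document; each statement's English description precedes it below -/
import Mathlib

section
/- Let G be a simple 3-connected graph with spanning tree T, Y ⊆ E(G)∖T non-empty, and {u,w} ∈ T a tree edge. Then Y equals the set of non-tree edges whose fundamental path contains the edge {u,w} if and only if both u and w are Y-splittable. -/
/-- A multigraph on vertex type `V` with edge type `E`: each edge has an
unordered pair of endpoints. -/
structure Multigraph (V E : Type) where
  ends : E → Sym2 V

namespace Multigraph

variable {V E : Type}

/-- Adjacency within the subgraph with edge set `F` and vertex set `S`. -/
def Adj (G : Multigraph V E) (F : Set E) (S : Set V) (a b : V) : Prop :=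
  a ∈ S ∧ b ∈ S ∧ ∃ e ∈ F, G.ends e = s(a, b)

/-- Reachability (lying in the same connected component) in the subgraph with
edge set `F` and vertex set `S`. -/
def Reach (G : Multigraph V E) (F : Set E) (S : Set V) : V → V → Prop :=
  Relation.ReflTransGen (G.Adj F S)

/-- `v` is `Y`-splittable: the auxiliary graph `H^v_Y`, whose vertices are the
connected components of `G` minus the edges `Y` and the vertex `v`, with edges
induced by `Y`-edges between components (loops for `Y`-edges within a
component), is bipartite.  This is expressed by a 2-colouring of the vertices
which is constant on the components of `G^v_Y` and proper on `Y`-edges not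
incident to `v`. -/
def Splittable (G : Multigraph V E) (Y : Set E) (v : V) : Prop :=
  ∃ c : V → Bool,
    (∀ a b : V, G.Reach (Set.univ \ Y) {v}ᶜ a b → c a = c b) ∧
    (∀ y ∈ Y, ∀ a b : V, G.ends y = s(a, b) → a ≠ v → b ≠ v → c a ≠ c b)

/-- `T` is a spanning tree of `G`: the subgraph `(V, T)` is connected and
every edge of `T` is a bridge of it. -/
def IsSpanningTree (G : Multigraph V E) (T : Set E) : Prop :=
  (∀ a b : V, G.Reach T Set.univ a b) ∧
  ∀ f ∈ T, ∃ a b : V, ¬ G.Reach (T \ {f}) Set.univ a b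

/-- The set of tree edges lying on the tree path `P_{u,w}(T)` between `u` and
`w`: a tree edge lies on this path iff deleting it separates `u` from `w`. -/
def pathEdges (G : Multigraph V E) (T : Set E) (u w : V) : Set E :=
  {f | f ∈ T ∧ ¬ G.Reach (T \ {f}) Set.univ u w}

/-- The fundamental path `P_e(T)` of an edge `e` (as a set of tree edges). -/
def fundPath (G : Multigraph V E) (T : Set E) (e : E) : Set E :=
  {f | f ∈ T ∧ ∀ a b : V, G.ends e = s(a, b) → ¬ G.Reach (T \ {f}) Set.univ a b}

/-- `v` lies on the tree path between `u` and `w`. -/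
def OnPath (G : Multigraph V E) (T : Set E) (u w v : V) : Prop :=
  v = u ∨ v = w ∨ ¬ G.Reach T {v}ᶜ u w

/-- `v` lies on the fundamental path `P_e(T)` of the edge `e`. -/
def OnFundPath (G : Multigraph V E) (T : Set E) (e : E) (v : V) : Prop :=
  ∀ a b : V, G.ends e = s(a, b) → G.OnPath T a b v

/-- The vertices covered by an edge set `F`. -/
def verts (G : Multigraph V E) (F : Set E) : Set V :=
  {v | ∃ e ∈ F, v ∈ G.ends e}

/-- `P⁻¹_{u,w}(G,T)`: the non-tree edges whose fundamental path contains the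
tree path from `u` to `w`. -/
def Pinv (G : Multigraph V E) (T : Set E) (u w : V) : Set E :=
  {e | e ∉ T ∧ G.pathEdges T u w ⊆ G.fundPath T e}

/-- A multigraph is simple if it has no loops and no parallel edges. -/
def Simple (G : Multigraph V E) : Prop :=
  (∀ e : E, ¬ (G.ends e).IsDiag) ∧ ∀ e f : E, G.ends e = G.ends f → e = f

/-- A `k`-separation: a partition of the edges into two parts, each of size at
least `k`, whose vertex sets share exactly `k` vertices. -/
def IsSep (G : Multigraph V E) (k : ℕ) (E1 E2 : Set E) : Prop :=
  E1 ∪ E2 = Set.univ ∧ Disjoint E1 E2 ∧ k ≤ E1.ncard ∧ k ≤ E2.ncard ∧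
    (G.verts E1 ∩ G.verts E2).ncard = k

/-- Tutte `k`-connectivity: connected and without `ℓ`-separations for
`1 ≤ ℓ < k`. -/
def TutteConnected (G : Multigraph V E) (k : ℕ) : Prop :=
  (∀ a b : V, G.Reach Set.univ Set.univ a b) ∧
  ∀ l : ℕ, 1 ≤ l → l < k → ¬ ∃ E1 E2 : Set E, G.IsSep l E1 E2

/-- A 2-separation with designated separating vertices `u` and `w`. -/
def IsTwoSep (G : Multigraph V E) (E1 E2 : Set E) (u w : V) : Prop :=
  E1 ∪ E2 = Set.univ ∧ Disjoint E1 E2 ∧ 2 ≤ E1.ncard ∧ 2 ≤ E2.ncard ∧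
    u ≠ w ∧ G.verts E1 ∩ G.verts E2 = {u, w}

/-- `v` is an articulation vertex of the subgraph with edge set `F`: after
removing `v` (and its incident edges), some two remaining vertices are
disconnected. -/
def ArticulationVertex (G : Multigraph V E) (F : Set E) (v : V) : Prop :=
  ∃ a b : V, a ≠ v ∧ b ≠ v ∧ ¬ G.Reach F {v}ᶜ a b

/-- The subgraph on the edge set `E1`, augmented by one new edge `{u, w}`. -/
def augment (G : Multigraph V E) (E1 : Set E) (u w : V) :
    Multigraph V (↥E1 ⊕ Unit) :=
  ⟨Sum.elim (fun e => G.ends e.1) (fun _ => s(u, w))⟩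

/-- The edge set `Q` of the intersection of the fundamental paths of all
edges in `Y`. -/
def Qedges (G : Multigraph V E) (T Y : Set E) : Set E :=
  ⋂ y ∈ Y, G.fundPath T y

variable {G : Multigraph V E} {F F' : Set E} {S S' : Set V} {a b x y : V}

lemma Adj.symm2 (h : G.Adj F S a b) : G.Adj F S b a := by
  obtain ⟨ha, hb, e, he, hee⟩ := h
  exact ⟨hb, ha, e, he, by rw [hee, Sym2.eq_swap]⟩

lemma Reach.symm2 (h : G.Reach F S a b) : G.Reach F S b a :=
  (@Relation.ReflTransGen.stdSymm _ _ ⟨fun _ _ h => h.symm2⟩).symm _ _ h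

lemma Reach.trans2 (h : G.Reach F S a b) (h' : G.Reach F S b x) : G.Reach F S a x :=
  Relation.ReflTransGen.trans h h'

lemma reach_mono (hF : F ⊆ F') (hS : S ⊆ S') (h : G.Reach F S a b) : G.Reach F' S' a b := by
  induction h with
  | refl => exact Relation.ReflTransGen.refl
  | tail h₁ h₂ ih =>
    exact Relation.ReflTransGen.tail ih
      ⟨hS h₂.1, hS h₂.2.1, h₂.2.2.imp (fun e he => ⟨hF he.1, he.2⟩)⟩

lemma reach_mem (h : G.Reach F Set.univ a b)
    (hS : ∀ x, G.Reach F Set.univ a x → x ∈ S) : G.Reach F S a b := by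
  induction h with
  | refl => exact Relation.ReflTransGen.refl
  | @tail c d h₁ h₂ ih =>
    exact Relation.ReflTransGen.tail ih
      ⟨hS c h₁, hS d (Relation.ReflTransGen.tail h₁ h₂), h₂.2.2⟩

lemma reach_cross (P : Set V) (h : G.Reach F S a b) (ha : a ∈ P) :
    b ∉ P → ∃ x y, x ∈ P ∧ y ∉ P ∧ G.Adj F S x y := by
  induction h with
  | refl => exact fun hb => absurd ha hb
  | @tail c d h₁ h₂ ih =>
    intro hd
    by_cases hc : c ∈ P
    · exact ⟨c, d, hc, hd, h₂⟩
    · exact ih hc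

lemma reach_uw {T : Set E} {f : E} {u w : V}
    (hT1 : ∀ a b : V, G.Reach T Set.univ a b) (hfe : G.ends f = s(u, w)) (x : V) :
    G.Reach (T \ {f}) Set.univ u x ∨ G.Reach (T \ {f}) Set.univ w x := by
  have h := hT1 u x
  induction h with
  | refl => exact Or.inl Relation.ReflTransGen.refl
  | @tail c d h₁ h₂ ih =>
    obtain ⟨-, -, g, hg, hge⟩ := h₂
    by_cases hgf : g = f
    · subst hgf
      have h' : s(u, w) = s(c, d) := hfe.symm.trans hge
      rcases Sym2.eq_iff.mp h' with ⟨hu, hw⟩ | ⟨hu, hw⟩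
      · exact Or.inr (hw ▸ Relation.ReflTransGen.refl)
      · exact Or.inl (hu ▸ Relation.ReflTransGen.refl)
    · refine ih.imp (fun h => Relation.ReflTransGen.tail h ?_)
        (fun h => Relation.ReflTransGen.tail h ?_) <;>
        exact ⟨Set.mem_univ _, Set.mem_univ _, g, ⟨hg, hgf⟩, hge⟩

lemma not_reach_uw {T : Set E} {f : E} {u w : V}
    (hT : G.IsSpanningTree T) (hf : f ∈ T) (hfe : G.ends f = s(u, w)) :
    ¬ G.Reach (T \ {f}) Set.univ u w := by
  intro huw
  obtain ⟨a, b, hab⟩ := hT.2 f hf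
  apply hab
  rcases reach_uw hT.1 hfe a with ha | ha <;> rcases reach_uw hT.1 hfe b with hb | hb
  · exact ha.symm2.trans2 hb
  · exact ha.symm2.trans2 (huw.trans2 hb)
  · exact ha.symm2.trans2 (huw.symm2.trans2 hb)
  · exact ha.symm2.trans2 hb

lemma const_comp {T Y : Set E} {f : E} {v : V} {c : V → Bool}
    (hc1 : ∀ a b : V, G.Reach (Set.univ \ Y) {v}ᶜ a b → c a = c b)
    (hYT : ∀ y ∈ Y, y ∉ T)
    (hnv : ¬ G.Reach (T \ {f}) Set.univ x v)
    (h : G.Reach (T \ {f}) Set.univ x y) : c x = c y := by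
  apply hc1
  refine reach_mono (fun g hg => ⟨Set.mem_univ _, fun hgY => hYT g hgY hg.1⟩)
    (le_refl _) (reach_mem h ?_)
  intro z hz
  simp only [Set.mem_compl_iff, Set.mem_singleton_iff]
  intro hzv
  exact hnv (hzv ▸ hz)


lemma crossY {T Y : Set E} {f : E} {u w : V} {cu cw : V → Bool}
    (hT : G.IsSpanningTree T) (hYT : ∀ y ∈ Y, y ∉ T) (hf : f ∈ T)
    (hfe : G.ends f = s(u, w))
    (hcu1 : ∀ a b : V, G.Reach (Set.univ \ Y) {u}ᶜ a b → cu a = cu b)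
    (hcu2 : ∀ y ∈ Y, ∀ a b : V, G.ends y = s(a, b) → a ≠ u → b ≠ u → cu a ≠ cu b)
    (hcw1 : ∀ a b : V, G.Reach (Set.univ \ Y) {w}ᶜ a b → cw a = cw b)
    (hcw2 : ∀ y ∈ Y, ∀ a b : V, G.ends y = s(a, b) → a ≠ w → b ≠ w → cw a ≠ cw b) :
    ∀ y ∈ Y, ∀ a b : V, G.ends y = s(a, b) → ¬ G.Reach (T \ {f}) Set.univ a b := by
  intro y hy a b hab hrab
  have hnuw : ¬ G.Reach (T \ {f}) Set.univ u w := not_reach_uw hT hf hfe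
  have hAw : ∀ x, G.Reach (T \ {f}) Set.univ u x → x ≠ w :=
    fun x hx hxw => hnuw (hxw ▸ hx)
  have hBu : ∀ x, G.Reach (T \ {f}) Set.univ w x → x ≠ u :=
    fun x hx hxu => hnuw ((hxu ▸ hx)).symm2
  rcases reach_uw hT.1 hfe a with ha | ha <;> rcases reach_uw hT.1 hfe b with hb | hb
  · -- both in A : contradicts cw properness
    have h1 : cw a = cw b :=
      (const_comp hcw1 hYT hnuw ha).symm.trans (const_comp hcw1 hYT hnuw hb)
    exact hcw2 y hy a b hab (hAw a ha) (hAw b hb) h1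
  · exact hnuw (ha.trans2 (hrab.trans2 hb.symm2))
  · exact hnuw (hb.trans2 (hrab.symm2.trans2 ha.symm2))
  · have h1 : cu a = cu b :=
      (const_comp hcu1 hYT (fun h => hnuw h.symm2) ha).symm.trans
        (const_comp hcu1 hYT (fun h => hnuw h.symm2) hb)
    exact hcu2 y hy a b hab (hBu a ha) (hBu b hb) h1

lemma main_half [Fintype V] [Fintype E]
    {T Y : Set E} {f : E} {u w : V} {cu cw : V → Bool}
    (hsimple : G.Simple) (h3 : G.TutteConnected 3)
    (hT : G.IsSpanningTree T)
    (hYT : ∀ y ∈ Y, y ∉ T) (hYne : Y.Nonempty)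
    (hf : f ∈ T) (hfe : G.ends f = s(u, w))
    (hcu1 : ∀ a b : V, G.Reach (Set.univ \ Y) {u}ᶜ a b → cu a = cu b)
    (hcu2 : ∀ y ∈ Y, ∀ a b : V, G.ends y = s(a, b) → a ≠ u → b ≠ u → cu a ≠ cu b)
    (hcw1 : ∀ a b : V, G.Reach (Set.univ \ Y) {w}ᶜ a b → cw a = cw b)
    (hcw2 : ∀ y ∈ Y, ∀ a b : V, G.ends y = s(a, b) → a ≠ w → b ≠ w → cw a ≠ cw b)
    (z : V) (hz : G.Reach (T \ {f}) Set.univ u z) (hzu : z ≠ u) :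
    cu z ≠ cu w := by
  intro hbad
  classical
  have hnuw : ¬ G.Reach (T \ {f}) Set.univ u w := not_reach_uw hT hf hfe
  have hAw : ∀ x, G.Reach (T \ {f}) Set.univ u x → x ≠ w :=
    fun x hx hxw => hnuw (hxw ▸ hx)
  have hBu : ∀ x, G.Reach (T \ {f}) Set.univ w x → x ≠ u :=
    fun x hx hxu => hnuw ((hxu ▸ hx)).symm2
  have hcuB : ∀ q, G.Reach (T \ {f}) Set.univ w q → cu q = cu w :=
    fun q hq => (const_comp hcu1 hYT (fun h => hnuw h.symm2) hq).symm
  have hcwA : ∀ p, G.Reach (T \ {f}) Set.univ u p → cw p = cw u :=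
    fun p hp => (const_comp hcw1 hYT hnuw hp).symm
  have hcross := crossY hT hYT hf hfe hcu1 hcu2 hcw1 hcw2
  set Z : Set V := {x | x ≠ u ∧ x ≠ w ∧ cu x = cu w ∧ cw x = cw u} with hZdef
  have hzZ : z ∈ Z := ⟨hzu, hAw z hz, hbad, hcwA z hz⟩
  -- (d) no Y-edge endpoint lies in Z
  have hdZ : ∀ y ∈ Y, ∀ p q : V, G.ends y = s(p, q) → p ∈ Z → False := by
    intro y hy p q hpq hpZ
    obtain ⟨hpu, hpw, hcup, hcwp⟩ := hpZ
    rcases reach_uw hT.1 hfe p with hpA | hpB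
    · have hqB : G.Reach (T \ {f}) Set.univ w q := by
        rcases reach_uw hT.1 hfe q with hq | hq
        · exact absurd (hpA.symm2.trans2 hq) (hcross y hy p q hpq)
        · exact hq
      exact hcu2 y hy p q hpq hpu (hBu q hqB) (hcup.trans (hcuB q hqB).symm)
    · have hqA : G.Reach (T \ {f}) Set.univ u q := by
        rcases reach_uw hT.1 hfe q with hq | hq
        · exact hq
        · exact absurd (hpB.symm2.trans2 hq) (hcross y hy p q hpq)
      exact hcw2 y hy p q hpq hpw (hAw q hqA) (hcwp.trans (hcwA q hqA).symm)
  -- (e) any edge from Z leads into Z ∪ {u, w}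
  have heZ : ∀ g : E, ∀ p q : V, G.ends g = s(p, q) → p ∈ Z → q ≠ u → q ≠ w → q ∈ Z := by
    intro g p q hpq hpZ hqu hqw
    by_cases hgY : g ∈ Y
    · exact absurd hpZ (fun h => hdZ g hgY p q hpq h)
    · have h1 : cu p = cu q := hcu1 p q (Relation.ReflTransGen.single
        ⟨by simpa using hpZ.1, by simpa using hqu, g, ⟨Set.mem_univ _, hgY⟩, hpq⟩)
      have h2 : cw p = cw q := hcw1 p q (Relation.ReflTransGen.single
        ⟨by simpa using hpZ.2.1, by simpa using hqw, g, ⟨Set.mem_univ _, hgY⟩, hpq⟩)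
      exact ⟨hqu, hqw, h1.symm.trans hpZ.2.2.1, h2.symm.trans hpZ.2.2.2⟩
  set S : Set V := Z ∪ {u, w} with hSdef
  have huS : u ∈ S := Or.inr (Or.inl rfl)
  have hwS : w ∈ S := Or.inr (Or.inr rfl)
  have hnotS : ∀ x : V, x ∉ S → x ∉ Z ∧ x ≠ u ∧ x ≠ w := by
    intro x hx
    refine ⟨fun h => hx (Or.inl h), fun h => hx (h ▸ huS), fun h => hx (h ▸ hwS)⟩
  set E₁ : Set E := {g | ∀ x ∈ G.ends g, x ∈ S} with hE₁def
  have hfE₁ : f ∈ E₁ := by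
    intro x hx
    rw [hfe] at hx
    rcases Sym2.mem_iff.mp hx with h | h
    · exact h ▸ huS
    · exact h ▸ hwS
  -- an edge at z, inside S
  obtain ⟨c, hadj, -⟩ : ∃ c, G.Adj Set.univ Set.univ z c ∧ G.Reach Set.univ Set.univ c u := by
    rcases Relation.ReflTransGen.cases_head (h3.1 z u) with h | h
    · exact absurd h hzu
    · exact h
  obtain ⟨-, -, g₀, -, hg₀⟩ := hadj
  have hcS : c ∈ S := by
    by_cases hcu' : c = u
    · exact hcu' ▸ huS
    by_cases hcw' : c = w
    · exact hcw' ▸ hwS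
    · exact Or.inl (heZ g₀ z c hg₀ hzZ hcu' hcw')
  have hg₀E₁ : g₀ ∈ E₁ := by
    intro x hx
    rw [hg₀] at hx
    rcases Sym2.mem_iff.mp hx with h | h
    · exact h ▸ Or.inl hzZ
    · exact h ▸ hcS
  have hg₀f : g₀ ≠ f := by
    intro h
    have h' : s(z, c) = s(u, w) := (h ▸ hg₀ : G.ends f = s(z, c)).symm.trans hfe
    rcases Sym2.eq_iff.mp h' with ⟨h1, -⟩ | ⟨h1, -⟩
    · exact hzu h1
    · exact hzZ.2.1 h1
  -- Y-edges are not inside S; find a vertex t outside S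
  obtain ⟨y₁, hy₁⟩ := hYne
  have hrep : ∀ zz : Sym2 V, ∃ p q : V, zz = s(p, q) := Sym2.ind (fun p q => ⟨p, q, rfl⟩)
  obtain ⟨p, q, hpq⟩ := hrep (G.ends y₁)
  have hpZ : p ∉ Z := fun h => hdZ y₁ hy₁ p q hpq h
  have hqZ : q ∉ Z := fun h => hdZ y₁ hy₁ q p (hpq.trans Sym2.eq_swap) h
  have hy₁f : G.ends y₁ ≠ s(u, w) := by
    intro h
    exact hYT y₁ hy₁ ((hsimple.2 y₁ f (h.trans hfe.symm)) ▸ hf)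
  have ht : ∃ t, t ∈ G.ends y₁ ∧ t ∉ S := by
    by_contra hcon
    push_neg at hcon
    have hpS : p ∈ S := hcon p (hpq ▸ Sym2.mem_mk_left p q)
    have hqS : q ∈ S := hcon q (hpq ▸ Sym2.mem_mk_right p q)
    have hpuw : p = u ∨ p = w := hpS.resolve_left hpZ
    have hquw : q = u ∨ q = w := hqS.resolve_left hqZ
    have hpq' : p ≠ q := by
      intro h
      exact hcross y₁ hy₁ p q hpq (h ▸ Relation.ReflTransGen.refl)
    apply hy₁f
    rw [hpq]
    rcases hpuw with rfl | rfl <;> rcases hquw with rfl | rfl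
    · exact absurd rfl hpq'
    · rfl
    · exact Sym2.eq_swap
    · exact absurd rfl hpq'
  obtain ⟨t, htm, htS⟩ := ht
  obtain ⟨htZ, htu, htw⟩ := hnotS t htS
  have hy₁E₂ : y₁ ∉ E₁ := fun h => htS (h t htm)
  -- a tree edge at t, also outside E₁
  have htedge : ∃ g₁, g₁ ∈ T ∧ g₁ ∉ E₁ := by
    have : ∃ c' : V, G.Adj (T \ {f}) Set.univ c' t := by
      rcases reach_uw hT.1 hfe t with h | h
      · rcases Relation.ReflTransGen.cases_tail h with h' | ⟨c', -, h'⟩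
        · exact absurd h' htu
        · exact ⟨c', h'⟩
      · rcases Relation.ReflTransGen.cases_tail h with h' | ⟨c', -, h'⟩
        · exact absurd h' htw
        · exact ⟨c', h'⟩
    obtain ⟨c', -, -, g₁, hg₁T, hg₁e⟩ := this
    refine ⟨g₁, hg₁T.1, fun h => htS (h t ?_)⟩
    rw [hg₁e]
    exact Sym2.mem_mk_right c' t
  obtain ⟨g₁, hg₁T, hg₁E₂⟩ := htedge
  have hg₁y₁ : g₁ ≠ y₁ := fun h => hYT y₁ hy₁ (h ▸ hg₁T)
  -- the separator is nonempty and contained in {u, w}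
  obtain ⟨x₀, y₀, hx₀S, hy₀S, hadj₀⟩ := reach_cross S (h3.1 u t) huS htS
  obtain ⟨-, -, g₂, -, hg₂e⟩ := hadj₀
  have hg₂E₂ : g₂ ∉ E₁ := fun h => hy₀S (h y₀ (hg₂e ▸ Sym2.mem_mk_right x₀ y₀))
  have hx₀uw : x₀ = u ∨ x₀ = w := by
    rcases hx₀S with hx₀Z | h
    · obtain ⟨hy₀Z, hy₀u, hy₀w⟩ := hnotS y₀ hy₀S
      exact absurd (heZ g₂ x₀ y₀ hg₂e hx₀Z hy₀u hy₀w) hy₀Z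
    · exact h
  have hx₀v1 : x₀ ∈ G.verts E₁ := by
    refine ⟨f, hfE₁, ?_⟩
    rw [hfe]
    rcases hx₀uw with rfl | rfl
    · exact Sym2.mem_mk_left _ _
    · exact Sym2.mem_mk_right _ _
  have hx₀v2 : x₀ ∈ G.verts E₁ᶜ := ⟨g₂, hg₂E₂, hg₂e ▸ Sym2.mem_mk_left x₀ y₀⟩
  -- subset of {u, w}
  have hsub : G.verts E₁ ∩ G.verts E₁ᶜ ⊆ {u, w} := by
    rintro x ⟨⟨gA, hgA, hxgA⟩, ⟨gB, hgB, hxgB⟩⟩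
    have hxS : x ∈ S := hgA x hxgA
    rcases hxS with hxZ | h
    · exfalso
      obtain ⟨y', hy'⟩ := Sym2.mem_iff_exists.mp hxgB
      have hy'S : y' ∉ S := by
        intro hy'S
        apply hgB
        intro a ha
        rw [hy'] at ha
        rcases Sym2.mem_iff.mp ha with h | h
        · exact h ▸ (Or.inl hxZ)
        · exact h ▸ hy'S
      obtain ⟨hy'Z, hy'u, hy'w⟩ := hnotS y' hy'S
      exact hy'Z (heZ gB x y' hy' hxZ hy'u hy'w)
    · exact h
  -- assemble the separation
  set l : ℕ := (G.verts E₁ ∩ G.verts E₁ᶜ).ncard with hldef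
  have hl1 : 1 ≤ l := (Set.ncard_pos (Set.toFinite _)).mpr ⟨x₀, hx₀v1, hx₀v2⟩
  have hl2 : l ≤ 2 := by
    calc l ≤ ({u, w} : Set V).ncard := Set.ncard_le_ncard hsub (Set.toFinite _)
    _ ≤ ({w} : Set V).ncard + 1 := Set.ncard_insert_le _ _
    _ = 2 := by rw [Set.ncard_singleton]
  have hE₁2 : 2 ≤ E₁.ncard := by
    have h : ({f, g₀} : Set E) ⊆ E₁ := by
      rintro g (rfl | rfl)
      · exact hfE₁
      · exact hg₀E₁
    calc 2 = ({f, g₀} : Set E).ncard := (Set.ncard_pair (Ne.symm hg₀f)).symm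
    _ ≤ E₁.ncard := Set.ncard_le_ncard h (Set.toFinite _)
  have hE₂2 : 2 ≤ (E₁ᶜ).ncard := by
    have h : ({g₁, y₁} : Set E) ⊆ E₁ᶜ := by
      rintro g (rfl | rfl)
      · exact hg₁E₂
      · exact hy₁E₂
    calc 2 = ({g₁, y₁} : Set E).ncard := (Set.ncard_pair hg₁y₁).symm
    _ ≤ (E₁ᶜ).ncard := Set.ncard_le_ncard h (Set.toFinite _)
  exact h3.2 l hl1 (lt_of_le_of_lt hl2 (by norm_num))
    ⟨E₁, E₁ᶜ, Set.union_compl_self _, disjoint_compl_right,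
      le_trans hl2 hE₁2, le_trans hl2 hE₂2, rfl⟩

end Multigraph

/-- For a simple 3-connected graph `G` with spanning tree `T`, non-empty
`Y ⊆ E(G)∖T` and a tree edge `f = {u, w} ∈ T`: `Y` equals the set of
non-tree edges whose fundamental path contains `f` if and only if both `u`
and `w` are `Y`-splittable. -/
theorem full_propagation_3connected {V E : Type} [Fintype V] [Fintype E]
    (G : Multigraph V E) (hsimple : G.Simple) (h3 : G.TutteConnected 3)
    (T : Set E) (hT : G.IsSpanningTree T)
    (Y : Set E) (hYT : ∀ y ∈ Y, y ∉ T) (hYne : Y.Nonempty)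
    (f : E) (hf : f ∈ T) (u w : V) (hfe : G.ends f = s(u, w)) :
    Y = {e : E | e ∉ T ∧ f ∈ G.fundPath T e} ↔
      (G.Splittable Y u ∧ G.Splittable Y w) := by
  classical
  have huw : u ≠ w := by
    have h := hsimple.1 f
    rw [hfe] at h
    simpa [Sym2.mk_isDiag_iff] using h
  have hnuw : ¬ G.Reach (T \ {f}) Set.univ u w := Multigraph.not_reach_uw hT hf hfe
  have hBu : ∀ x, G.Reach (T \ {f}) Set.univ w x → x ≠ u :=
    fun x hx hxu => hnuw ((hxu ▸ hx)).symm2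
  constructor
  · intro hY
    set c₀ : V → Bool := fun x => if G.Reach (T \ {f}) Set.univ u x then true else false
      with hc₀
    have hc₀iff : ∀ a b : V,
        (G.Reach (T \ {f}) Set.univ u a ↔ G.Reach (T \ {f}) Set.univ u b) → c₀ a = c₀ b := by
      intro a b h
      by_cases ha : G.Reach (T \ {f}) Set.univ u a
      · simp [hc₀, ha, h.mp ha]
      · have hb : ¬ G.Reach (T \ {f}) Set.univ u b := fun hb => ha (h.mpr hb)
        simp [hc₀, ha, hb]
    have hstep : ∀ v : V, (v = u ∨ v = w) → ∀ a b : V,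
        G.Adj (Set.univ \ Y) {v}ᶜ a b → c₀ a = c₀ b := by
      intro v hv a b hadj
      obtain ⟨hav, hbv, g, hgm, hg⟩ := hadj
      have hav' : a ≠ v := by simpa using hav
      have hbv' : b ≠ v := by simpa using hbv
      have hRab : G.Reach (T \ {f}) Set.univ a b := by
        by_cases hgT : g ∈ T
        · by_cases hgf : g = f
          · exfalso
            subst hgf
            have h' := hfe.symm.trans hg
            rcases Sym2.eq_iff.mp h' with ⟨h1, h2⟩ | ⟨h1, h2⟩ <;> rcases hv with rfl | rfl
            · exact hav' h1.symm
            · exact hbv' h2.symm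
            · exact hbv' h1.symm
            · exact hav' h2.symm
          · exact Relation.ReflTransGen.single
              ⟨Set.mem_univ _, Set.mem_univ _, g, ⟨hgT, hgf⟩, hg⟩
        · have hgY : g ∉ Y := hgm.2
          have h1 : ¬ (g ∉ T ∧ f ∈ G.fundPath T g) := by rw [hY] at hgY; exact hgY
          have h2 : f ∉ G.fundPath T g := fun h => h1 ⟨hgT, h⟩
          have h3' : ¬ (f ∈ T ∧ ∀ x y : V, G.ends g = s(x, y) →
              ¬ G.Reach (T \ {f}) Set.univ x y) := h2
          push_neg at h3'
          obtain ⟨x, y, hxy, hr⟩ := h3' hf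
          rcases Sym2.eq_iff.mp (hxy.symm.trans hg) with ⟨rfl, rfl⟩ | ⟨rfl, rfl⟩
          · exact hr
          · exact hr.symm2
      exact hc₀iff a b ⟨fun h => h.trans2 hRab, fun h => h.trans2 hRab.symm2⟩
    have hconst : ∀ v : V, (v = u ∨ v = w) → ∀ a b : V,
        G.Reach (Set.univ \ Y) {v}ᶜ a b → c₀ a = c₀ b := by
      intro v hv a b h
      induction h with
      | refl => rfl
      | tail h₁ h₂ ih => exact ih.trans (hstep v hv _ _ h₂)
    have hprop : ∀ y ∈ Y, ∀ a b : V, G.ends y = s(a, b) → c₀ a ≠ c₀ b := by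
      intro y hy a b hab
      have hy' : y ∉ T ∧ f ∈ G.fundPath T y := by rw [hY] at hy; exact hy
      obtain ⟨-, hpath⟩ : f ∈ T ∧ ∀ x y' : V, G.ends y = s(x, y') →
          ¬ G.Reach (T \ {f}) Set.univ x y' := hy'.2
      have hnab : ¬ G.Reach (T \ {f}) Set.univ a b := hpath a b hab
      rcases Multigraph.reach_uw hT.1 hfe a with ha | ha <;>
        rcases Multigraph.reach_uw hT.1 hfe b with hb | hb
      · exact absurd (ha.symm2.trans2 hb) hnab
      · have h1 : ¬ G.Reach (T \ {f}) Set.univ u b := fun h => hnuw (h.trans2 hb.symm2)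
        simp [hc₀, ha, h1]
      · have h1 : ¬ G.Reach (T \ {f}) Set.univ u a := fun h => hnuw (h.trans2 ha.symm2)
        simp [hc₀, h1, hb]
      · exact absurd (ha.symm2.trans2 hb) hnab
    exact ⟨⟨c₀, hconst u (Or.inl rfl), fun y hy a b hab _ _ => hprop y hy a b hab⟩,
           ⟨c₀, hconst w (Or.inr rfl), fun y hy a b hab _ _ => hprop y hy a b hab⟩⟩
  · rintro ⟨⟨cu, hcu1, hcu2⟩, ⟨cw, hcw1, hcw2⟩⟩
    have hcross := Multigraph.crossY hT hYT hf hfe hcu1 hcu2 hcw1 hcw2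
    have hKu : ∀ z, G.Reach (T \ {f}) Set.univ u z → z ≠ u → cu z ≠ cu w :=
      fun z hz hzu =>
        Multigraph.main_half hsimple h3 hT hYT hYne hf hfe hcu1 hcu2 hcw1 hcw2 z hz hzu
    have hKw : ∀ z, G.Reach (T \ {f}) Set.univ w z → z ≠ w → cw z ≠ cw u :=
      fun z hz hzw =>
        Multigraph.main_half hsimple h3 hT hYT hYne hf (hfe.trans Sym2.eq_swap)
          hcw1 hcw2 hcu1 hcu2 z hz hzw
    have hcuB : ∀ q, G.Reach (T \ {f}) Set.univ w q → cu q = cu w :=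
      fun q hq => (Multigraph.const_comp hcu1 hYT (fun h => hnuw h.symm2) hq).symm
    have main : ∀ e : E, e ∉ T → e ∉ Y → ∀ a b : V, G.ends e = s(a, b) →
        G.Reach (T \ {f}) Set.univ u a → G.Reach (T \ {f}) Set.univ w b → False := by
      intro e heT heY a b hab haA hbB
      by_cases hau : a = u
      · subst hau
        have hbw : b ≠ w := by
          intro h
          subst h
          exact heT ((hsimple.2 e f (hab.trans hfe.symm)) ▸ hf)
        have h2 : cw a = cw b := hcw1 a b (Relation.ReflTransGen.single
          ⟨by simpa using huw, by simpa using hbw, e, ⟨Set.mem_univ _, heY⟩, hab⟩)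
        exact hKw b hbB hbw h2.symm
      · have h2 : cu a = cu b := hcu1 a b (Relation.ReflTransGen.single
          ⟨by simpa using hau, by simpa using hBu b hbB, e, ⟨Set.mem_univ _, heY⟩, hab⟩)
        exact hKu a haA hau (h2.trans (hcuB b hbB))
    ext e
    simp only [Set.mem_setOf_eq]
    constructor
    · intro he
      exact ⟨hYT e he, hf, fun a b hab => hcross e he a b hab⟩
    · rintro ⟨heT, hfund⟩
      obtain ⟨-, hpath⟩ : f ∈ T ∧ ∀ a b : V, G.ends e = s(a, b) →
          ¬ G.Reach (T \ {f}) Set.univ a b := hfund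
      have hrep : ∀ zz : Sym2 V, ∃ p q : V, zz = s(p, q) := Sym2.ind (fun p q => ⟨p, q, rfl⟩)
      obtain ⟨a, b, hab⟩ := hrep (G.ends e)
      by_contra heY
      have hnab := hpath a b hab
      rcases Multigraph.reach_uw hT.1 hfe a with ha | ha <;>
        rcases Multigraph.reach_uw hT.1 hfe b with hb | hb
      · exact hnab (ha.symm2.trans2 hb)
      · exact main e heT heY a b hab ha hb
      · exact main e heT heY b a (hab.trans Sym2.eq_swap) hb ha
      · exact hnab (ha.symm2.trans2 hb)
end

section
/- Let T be a minimal SPQR tree of a 2-connected graph G = (V,E) with |E| ≥ 3. Then the number of skeleton graphs (nodes) of T is at most |E| − 2, and the total number of vertices over all skeletons of T is at most 3|E| − 6. -/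
namespace Multigraph

variable {V E : Type}

/-- Connectivity of the subgraph with edge set `F` on the vertex set `S`. -/
def ConnectedOn (G : Multigraph V E) (F : Set E) (S : Set V) : Prop :=
  ∀ a ∈ S, ∀ b ∈ S, G.Reach F S a b

/-- `T` is a spanning tree of the subgraph with edge set `F` and vertex set
`S`. -/
def IsSpanningTreeOn (G : Multigraph V E) (F : Set E) (S : Set V)
    (T : Set E) : Prop :=
  T ⊆ F ∧ G.ConnectedOn T S ∧
    ∀ f ∈ T, ∃ a ∈ S, ∃ b ∈ S, ¬ G.Reach (T \ {f}) S a b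

/-- The subgraph with edge set `F` is simple. -/
def SimpleOn (G : Multigraph V E) (F : Set E) : Prop :=
  (∀ e ∈ F, ¬ (G.ends e).IsDiag) ∧
    ∀ e ∈ F, ∀ f ∈ F, G.ends e = G.ends f → e = f

/-- A `k`-separation of the subgraph with edge set `F`. -/
def IsSepOn (G : Multigraph V E) (F : Set E) (k : ℕ) (E1 E2 : Set E) : Prop :=
  E1 ∪ E2 = F ∧ Disjoint E1 E2 ∧ k ≤ E1.ncard ∧ k ≤ E2.ncard ∧
    (G.verts E1 ∩ G.verts E2).ncard = k

/-- Tutte `k`-connectivity of the subgraph with edge set `F` and vertex set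
`S`. -/
def TutteConnectedOn (G : Multigraph V E) (F : Set E) (S : Set V)
    (k : ℕ) : Prop :=
  G.ConnectedOn F S ∧
    ∀ l : ℕ, 1 ≤ l → l < k → ¬ ∃ E1 E2 : Set E, G.IsSepOn F l E1 E2

end Multigraph

/-- An (undirected) SPQR tree: a tree of nodes `ι`, each carrying a skeleton
(a connected loopless multigraph with a spanning tree), where the tree edges
are realised by a fixpoint-free pairing of the virtual edges; exactly one
virtual edge of each pair belongs to the respective skeleton spanning
trees. -/
structure SPQRTree : Type 1 where
  ι : Type
  W : Type
  F : Type
  M : Multigraph W F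
  nodeV : W → ι
  nodeE : F → ι
  endsNode : ∀ (f : F) (x : W), x ∈ M.ends f → nodeV x = nodeE f
  loopless : ∀ f : F, ¬ (M.ends f).IsDiag
  skelConn : ∀ i : ι, M.ConnectedOn {f | nodeE f = i} {x | nodeV x = i}
  Tskel : Set F
  skelTree : ∀ i : ι,
    M.IsSpanningTreeOn {f | nodeE f = i} {x | nodeV x = i}
      (Tskel ∩ {f | nodeE f = i})
  virt : Set F
  pairing : F → F
  pair_mem : ∀ f ∈ virt, pairing f ∈ virt
  pair_invol : ∀ f ∈ virt, pairing (pairing f) = f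
  pair_ne : ∀ f ∈ virt, nodeE (pairing f) ≠ nodeE f
  pair_tree : ∀ f ∈ virt, (f ∈ Tskel ↔ pairing f ∉ Tskel)
  tree_conn : ∀ i j : ι,
    Relation.ReflTransGen
      (fun a b => ∃ f ∈ virt, nodeE f = a ∧ nodeE (pairing f) = b) i j
  tree_count : virt.ncard = 2 * (Nat.card ι - 1)

namespace SPQRTree

variable (D : SPQRTree)

/-- The edges of the skeleton of node `i`. -/
def skelE (i : D.ι) : Set D.F := {f | D.nodeE f = i}

/-- The vertices of the skeleton of node `i`. -/
def skelV (i : D.ι) : Set D.W := {x | D.nodeV x = i}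

/-- A series node: its skeleton is a cycle of length at least 3 (connected,
loopless, every vertex of degree 2, as many edges as vertices). -/
def IsSeries (i : D.ι) : Prop :=
  3 ≤ (D.skelE i).ncard ∧ (D.skelV i).ncard = (D.skelE i).ncard ∧
    ∀ x ∈ D.skelV i, ({f | f ∈ D.skelE i ∧ x ∈ D.M.ends f} : Set D.F).ncard = 2

/-- A parallel node: exactly two vertices and at least three edges. -/
def IsParallel (i : D.ι) : Prop :=
  (D.skelV i).ncard = 2 ∧ 3 ≤ (D.skelE i).ncard

/-- A Q node: at most 2 vertices and 2 edges, and the only node of the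
tree. -/
def IsQ (i : D.ι) : Prop :=
  (D.skelV i).ncard ≤ 2 ∧ (D.skelE i).ncard ≤ 2 ∧ ∀ j : D.ι, j = i

/-- A rigid node: simple, 3-connected and with at least four edges. -/
def IsRigid (i : D.ι) : Prop :=
  D.M.SimpleOn (D.skelE i) ∧ 4 ≤ (D.skelE i).ncard ∧
    D.M.TutteConnectedOn (D.skelE i) (D.skelV i) 3

/-- Every node is of one of the four types. -/
def Typed : Prop :=
  ∀ i : D.ι, D.IsSeries i ∨ D.IsParallel i ∨ D.IsQ i ∨ D.IsRigid i

/-- Minimality: no two adjacent series nodes and no two adjacent parallel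
nodes. -/
def Minimal : Prop :=
  ∀ f ∈ D.virt,
    ¬ (D.IsSeries (D.nodeE f) ∧ D.IsSeries (D.nodeE (D.pairing f))) ∧
    ¬ (D.IsParallel (D.nodeE f) ∧ D.IsParallel (D.nodeE (D.pairing f)))

end SPQRTree

namespace Multigraph

variable {V E : Type}

lemma Adj.symm' {G : Multigraph V E} {F : Set E} {S : Set V} {a b : V}
    (h : G.Adj F S a b) : G.Adj F S b a := by
  obtain ⟨ha, hb, e, he, hee⟩ := h
  exact ⟨hb, ha, e, he, by rw [hee, Sym2.eq_swap]⟩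

lemma Reach.symm' {G : Multigraph V E} {F : Set E} {S : Set V} {a b : V}
    (h : G.Reach F S a b) : G.Reach F S b a := by
  induction h with
  | refl => exact .refl
  | tail _ h2 ih => exact (Relation.ReflTransGen.single h2.symm').trans ih

lemma reach_eq_or_mem {G : Multigraph V E} {F : Set E} {S : Set V} {a b : V}
    (h : G.Reach F S a b) : a = b ∨ (a ∈ S ∧ b ∈ S) := by
  induction h with
  | refl => exact Or.inl rfl
  | tail _ h2 ih =>
    rcases ih with rfl | ⟨ha, _⟩
    · exact Or.inr ⟨h2.1, h2.2.1⟩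
    · exact Or.inr ⟨ha, h2.2.1⟩

lemma reach_restrict {G : Multigraph V E} {F : Set E} {S S1 : Set V}
    (hclosed : ∀ a b, a ∈ S1 → G.Adj F S a b → b ∈ S1)
    {x y : V} (hx : x ∈ S1) (h : G.Reach F S x y) :
    G.Reach F S1 x y ∧ y ∈ S1 := by
  induction h with
  | refl => exact ⟨.refl, hx⟩
  | tail _ h2 ih =>
    obtain ⟨hr, hb⟩ := ih
    have hc := hclosed _ _ hb h2
    obtain ⟨_, _, e, he, hee⟩ := h2
    exact ⟨hr.tail ⟨hb, hc, e, he, hee⟩, hc⟩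

lemma reach_split {G : Multigraph V E} {F : Set E} {S : Set V} {e : E} {u v : V}
    (he : G.ends e = s(u, v)) {a b : V} (h : G.Reach F S a b) :
    G.Reach (F \ {e}) S a b ∨
    (G.Reach (F \ {e}) S a u ∧ G.Reach (F \ {e}) S v b) ∨
    (G.Reach (F \ {e}) S a v ∧ G.Reach (F \ {e}) S u b) := by
  induction h with
  | refl => exact Or.inl .refl
  | @tail x c _ h2 ih =>
    obtain ⟨hb, hc, f, hf, hef⟩ := h2
    by_cases hfe : f = e
    · subst hfe
      have heq : s(u, v) = s(x, c) := he.symm.trans hef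
      rw [Sym2.eq_iff] at heq
      rcases heq with ⟨hu, hv⟩ | ⟨hu, hv⟩
      · -- u = x, v = c
        subst hu; subst hv
        rcases ih with h1 | ⟨h1, _⟩ | ⟨h1, h2'⟩
        · exact Or.inr (Or.inl ⟨h1, .refl⟩)
        · exact Or.inr (Or.inl ⟨h1, .refl⟩)
        · exact Or.inl h1
      · -- u = c, v = x
        subst hu; subst hv
        rcases ih with h1 | ⟨h1, _⟩ | ⟨h1, h2'⟩
        · exact Or.inr (Or.inr ⟨h1, .refl⟩)
        · exact Or.inl h1
        · exact Or.inr (Or.inr ⟨h1, .refl⟩)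
    · have hstep : G.Adj (F \ {e}) S x c := ⟨hb, hc, f, ⟨hf, hfe⟩, hef⟩
      rcases ih with h1 | ⟨h1, h2'⟩ | ⟨h1, h2'⟩
      · exact Or.inl (h1.tail hstep)
      · exact Or.inr (Or.inl ⟨h1, h2'.tail hstep⟩)
      · exact Or.inr (Or.inr ⟨h1, h2'.tail hstep⟩)

lemma connectedOn_empty_ncard (G : Multigraph V E) {S : Set V}
    (hS : S.Finite) (hSne : S.Nonempty)
    (hconn : G.ConnectedOn ∅ S) : S.ncard ≤ 1 := by
  obtain ⟨a, ha⟩ := hSne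
  have hsub : S ⊆ {a} := by
    intro x hx
    have h := hconn a ha x hx
    have : a = x := by
      clear hx
      induction h with
      | refl => rfl
      | tail _ h2 ih => obtain ⟨-, -, e, he, -⟩ := h2; exact he.elim
    simp [← this]
  calc S.ncard ≤ ({a} : Set V).ncard := Set.ncard_le_ncard hsub (Set.finite_singleton a)
    _ = 1 := Set.ncard_singleton a

/-- A finite connected (multi)graph has at most one more vertex than edges. -/
lemma connectedOn_ncard_le (G : Multigraph V E) (n : ℕ) :
    ∀ F : Set E, F.Finite → F.ncard ≤ n → ∀ S : Set V, S.Finite → S.Nonempty →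
      G.ConnectedOn F S → S.ncard ≤ F.ncard + 1 := by
  induction n with
  | zero =>
    intro F hF hFn S hS hSne hconn
    have hFe : F = ∅ := by rwa [Nat.le_zero, Set.ncard_eq_zero hF] at hFn
    subst hFe
    simpa using G.connectedOn_empty_ncard hS hSne hconn
  | succ n ih =>
    intro F hF hFn S hS hSne hconn
    by_cases hFe : F = ∅
    · subst hFe
      simpa using G.connectedOn_empty_ncard hS hSne hconn
    obtain ⟨e, heF⟩ := Set.nonempty_iff_ne_empty.mpr hFe
    obtain ⟨u, v, huv⟩ : ∃ u v, G.ends e = s(u, v) := by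
      induction G.ends e using Sym2.ind with
      | _ x y => exact ⟨x, y, rfl⟩
    set F' : Set E := F \ {e} with hF'def
    have hF'fin : F'.Finite := hF.subset Set.diff_subset
    have hF'card : F'.ncard + 1 = F.ncard := Set.ncard_diff_singleton_add_one heF hF
    have hF'n : F'.ncard ≤ n := by omega
    by_cases huS : u ∈ S ∧ v ∈ S
    · obtain ⟨hu, hv⟩ := huS
      set S1 : Set V := {x | x ∈ S ∧ G.Reach F' S u x} with hS1def
      set S2 : Set V := {x | x ∈ S ∧ G.Reach F' S v x} with hS2def
      have hcl1 : ∀ a b, a ∈ S1 → G.Adj F' S a b → b ∈ S1 :=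
        fun a b ha hadj => ⟨hadj.2.1, ha.2.tail hadj⟩
      have hcl2 : ∀ a b, a ∈ S2 → G.Adj F' S a b → b ∈ S2 :=
        fun a b ha hadj => ⟨hadj.2.1, ha.2.tail hadj⟩
      have hsub : S ⊆ S1 ∪ S2 := by
        intro x hx
        rcases reach_split huv (hconn u hu x hx) with h | ⟨h1, h2⟩ | ⟨h1, h2⟩
        · exact Or.inl ⟨hx, h⟩
        · exact Or.inr ⟨hx, h2⟩
        · exact Or.inl ⟨hx, h2⟩
      have hS1fin : S1.Finite := hS.subset fun x hx => hx.1
      have hS2fin : S2.Finite := hS.subset fun x hx => hx.1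
      by_cases hint : (S1 ∩ S2).Nonempty
      · obtain ⟨w, hw1, hw2⟩ := hint
        have huv' : G.Reach F' S u v := hw1.2.trans hw2.2.symm'
        have hS1' : S ⊆ S1 := by
          intro x hx
          rcases hsub hx with h | ⟨hxS, hxr⟩
          · exact h
          · exact ⟨hxS, huv'.trans hxr⟩
        have hconn' : G.ConnectedOn F' S :=
          fun a ha b hb => ((hS1' ha).2.symm').trans (hS1' hb).2
        have := ih F' hF'fin hF'n S hS hSne hconn'
        omega
      · set P1 : Set E := {f | f ∈ F' ∧ ∃ a ∈ S1, ∃ b ∈ S1, G.ends f = s(a, b)} with hP1def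
        set P2 : Set E := {f | f ∈ F' ∧ ∃ a ∈ S2, ∃ b ∈ S2, G.ends f = s(a, b)} with hP2def
        have hP1sub : P1 ⊆ F' := fun f hf => hf.1
        have hP2sub : P2 ⊆ F' := fun f hf => hf.1
        have hP1fin : P1.Finite := hF'fin.subset hP1sub
        have hP2fin : P2.Finite := hF'fin.subset hP2sub
        have conn1 : G.ConnectedOn P1 S1 := by
          intro a ha b hb
          have hr : G.Reach F' S a b := ha.2.symm'.trans hb.2
          have hres := (reach_restrict hcl1 ha hr).1
          refine Relation.ReflTransGen.mono ?_ _ _ hres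
          intro x y hxy
          obtain ⟨hx1, hy1, f, hf, hef⟩ := hxy
          exact ⟨hx1, hy1, f, ⟨hf, x, hx1, y, hy1, hef⟩, hef⟩
        have conn2 : G.ConnectedOn P2 S2 := by
          intro a ha b hb
          have hr : G.Reach F' S a b := ha.2.symm'.trans hb.2
          have hres := (reach_restrict hcl2 ha hr).1
          refine Relation.ReflTransGen.mono ?_ _ _ hres
          intro x y hxy
          obtain ⟨hx1, hy1, f, hf, hef⟩ := hxy
          exact ⟨hx1, hy1, f, ⟨hf, x, hx1, y, hy1, hef⟩, hef⟩
        have h1 := ih P1 hP1fin (le_trans (Set.ncard_le_ncard hP1sub hF'fin) hF'n)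
          S1 hS1fin ⟨u, hu, .refl⟩ conn1
        have h2 := ih P2 hP2fin (le_trans (Set.ncard_le_ncard hP2sub hF'fin) hF'n)
          S2 hS2fin ⟨v, hv, .refl⟩ conn2
        have hdisjS : Disjoint S1 S2 := Set.disjoint_iff_inter_eq_empty.mpr
          (Set.not_nonempty_iff_eq_empty.mp hint)
        have hdisjP : Disjoint P1 P2 := by
          rw [Set.disjoint_left]
          rintro f ⟨hf1, a, ha, b, hb, hab⟩ ⟨hf2, a', ha', b', hb', hab'⟩
          have : a' = a ∨ a' = b := by
            have : s(a, b) = s(a', b') := hab.symm.trans hab'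
            rw [Sym2.eq_iff] at this
            rcases this with ⟨h, -⟩ | ⟨-, h⟩
            · exact Or.inl h.symm
            · exact Or.inr h.symm
          have ha'1 : a' ∈ S1 := by rcases this with rfl | rfl <;> assumption
          exact Set.disjoint_left.mp hdisjS ha'1 ha'
        have hPcard : P1.ncard + P2.ncard ≤ F'.ncard := by
          rw [← Set.ncard_union_eq hdisjP hP1fin hP2fin]
          exact Set.ncard_le_ncard (Set.union_subset hP1sub hP2sub) hF'fin
        have hScard : S.ncard ≤ S1.ncard + S2.ncard := by
          calc S.ncard ≤ (S1 ∪ S2).ncard := Set.ncard_le_ncard hsub (hS1fin.union hS2fin)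
            _ = S1.ncard + S2.ncard := Set.ncard_union_eq hdisjS hS1fin hS2fin
        omega
    · have hconn' : G.ConnectedOn F' S := by
        intro a ha b hb
        rcases reach_split huv (hconn a ha b hb) with h | ⟨h1, h2⟩ | ⟨h1, h2⟩
        · exact h
        · exfalso
          have hu : u ∈ S := by
            rcases reach_eq_or_mem h1 with rfl | ⟨-, h⟩
            · exact ha
            · exact h
          have hv : v ∈ S := by
            rcases reach_eq_or_mem h2 with rfl | ⟨h, -⟩
            · exact hb
            · exact h
          exact huS ⟨hu, hv⟩
        · exfalso
          have hv : v ∈ S := by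
            rcases reach_eq_or_mem h1 with rfl | ⟨-, h⟩
            · exact ha
            · exact h
          have hu : u ∈ S := by
            rcases reach_eq_or_mem h2 with rfl | ⟨h, -⟩
            · exact hb
            · exact h
          exact huS ⟨hu, hv⟩
      have := ih F' hF'fin hF'n S hS hSne hconn'
      omega

end Multigraph

/-- For a minimal SPQR tree
 of a 2-connected graph `G` with at least three
edges (the regular, i.e. non-virtual, skeleton edges being in bijection with
the edges of `G`), the number of nodes is at most `|E| - 2` and the total
number of skeleton vertices is at most `3|E| - 6`. -/
theorem spqr_size_bounds {V E : Type} [Fintype V] [Fintype E]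
    (G : Multigraph V E) (h2 : G.TutteConnected 2)
    (hE : 3 ≤ Fintype.card E)
    (D : SPQRTree) (hι : Finite D.ι) (hW : Finite D.W) (hF : Finite D.F)
    (reg : {f : D.F // f ∉ D.virt} ≃ E)
    (htyped : D.Typed) (hmin : D.Minimal) :
    Nat.card D.ι ≤ Fintype.card E - 2 ∧
    Nat.card D.W ≤ 3 * Fintype.card E - 6 := by
  classical
  have instι : Fintype D.ι := Fintype.ofFinite _
  have instW : Fintype D.W := Fintype.ofFinite _
  have instF : Fintype D.F := Fintype.ofFinite _
  set c := Fintype.card E with hc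
  -- total number of skeleton edges
  have hFcard : Nat.card D.F = c + D.virt.ncard := by
    have h1 : Nat.card {f : D.F // f ∉ D.virt} = c := by
      rw [Nat.card_congr reg, Nat.card_eq_fintype_card]
    have h2 : D.virt.ncard + (D.virtᶜ : Set D.F).ncard = Nat.card D.F :=
      Set.ncard_add_ncard_compl D.virt (Set.toFinite _) (Set.toFinite _)
    have h3 : Nat.card {f : D.F // f ∉ D.virt} = (D.virtᶜ : Set D.F).ncard := by
      rw [← Nat.card_coe_set_eq]
      exact Nat.card_congr (Equiv.subtypeEquivRight fun f => (Set.mem_compl_iff _ _).symm)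
    omega
  set m : D.ι → ℕ := fun i => (D.skelE i).ncard with hm
  set w : D.ι → ℕ := fun i => (D.skelV i).ncard with hw
  have hsumE : ∑ i, m i = Nat.card D.F := by
    rw [Nat.card_eq_fintype_card, ← Finset.card_univ,
      Finset.card_eq_sum_card_fiberwise (f := D.nodeE) (t := Finset.univ)
        (fun x _ => Finset.mem_univ _)]
    refine Finset.sum_congr rfl fun i _ => ?_
    have : D.skelE i = ↑(Finset.univ.filter fun f => D.nodeE f = i) := by
      ext f; simp [SPQRTree.skelE]
    rw [hm]
    simp only [this, Set.ncard_coe_finset]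
  have hsumV : ∑ i, w i = Nat.card D.W := by
    rw [Nat.card_eq_fintype_card, ← Finset.card_univ,
      Finset.card_eq_sum_card_fiberwise (f := D.nodeV) (t := Finset.univ)
        (fun x _ => Finset.mem_univ _)]
    refine Finset.sum_congr rfl fun i _ => ?_
    have : D.skelV i = ↑(Finset.univ.filter fun x => D.nodeV x = i) := by
      ext x; simp [SPQRTree.skelV]
    rw [hw]
    simp only [this, Set.ncard_coe_finset]
  have hEne : Nonempty E := Fintype.card_pos_iff.mp (by omega)
  obtain ⟨e0⟩ := hEne
  have hιne : Nonempty D.ι := ⟨D.nodeE (reg.symm e0).1⟩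
  set k := Nat.card D.ι - 1 with hk
  have hn : Nat.card D.ι = k + 1 := by
    have := Nat.card_pos (α := D.ι)
    omega
  have hvirt : D.virt.ncard = 2 * k := by rw [D.tree_count]
  -- no Q nodes
  have notQ : ∀ i, ¬ D.IsQ i := by
    intro i hQ
    have huniv : D.skelE i = Set.univ := by
      ext f
      simp [SPQRTree.skelE, hQ.2.2 (D.nodeE f)]
    have h2 := hQ.2.1
    rw [huniv, Set.ncard_univ] at h2
    omega
  set r := (Finset.univ.filter fun i => D.IsRigid i).card with hr
  have hlow : ∀ i, 3 + (if D.IsRigid i then 1 else 0) ≤ m i := by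
    intro i
    by_cases hri : D.IsRigid i
    · rw [if_pos hri]
      have h4 := hri.2.1
      show 3 + 1 ≤ (D.skelE i).ncard
      omega
    · rw [if_neg hri, add_zero]
      rcases htyped i with h | h | h | h
      · exact h.1
      · exact h.2
      · exact absurd h (notQ i)
      · exact absurd h hri
  have hupp : ∀ i, w i ≤ m i + (if D.IsRigid i then 1 else 0) := by
    intro i
    by_cases hri : D.IsRigid i
    · rw [if_pos hri]
      by_cases hne : (D.skelV i).Nonempty
      · exact D.M.connectedOn_ncard_le (D.skelE i).ncard (D.skelE i) (Set.toFinite _)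
          le_rfl (D.skelV i) (Set.toFinite _) hne (D.skelConn i)
      · rw [Set.not_nonempty_iff_eq_empty] at hne
        simp [hw, hne]
    · rw [if_neg hri, add_zero]
      rcases htyped i with h | h | h | h
      · exact le_of_eq h.2.1
      · calc w i = 2 := h.1
          _ ≤ m i := le_trans (by norm_num) h.2
      · exact absurd h (notQ i)
      · exact absurd h hri
  have hsum_low : 3 * Nat.card D.ι + r ≤ ∑ i, m i := by
    calc 3 * Nat.card D.ι + r = ∑ i : D.ι, (3 + (if D.IsRigid i then 1 else 0)) := by
          rw [Finset.sum_add_distrib, Finset.sum_const, Finset.card_univ, smul_eq_mul,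
            mul_comm, Nat.card_eq_fintype_card, hr, Finset.card_filter]
      _ ≤ ∑ i, m i := Finset.sum_le_sum fun i _ => hlow i
  have hsum_upp : ∑ i, w i ≤ ∑ i, m i + r := by
    calc ∑ i, w i ≤ ∑ i : D.ι, (m i + (if D.IsRigid i then 1 else 0)) :=
          Finset.sum_le_sum fun i _ => hupp i
      _ = ∑ i, m i + r := by
          rw [Finset.sum_add_distrib, hr, Finset.card_filter]
  have hE3 : 3 ≤ c := hE
  omega
end
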